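/- arXiv:1904.00920 — 2 statements merged into one kernel-verified Lean document; each statement's English description precedes it below -/
import Mathlib

section
/- Let (f_k)_{k=1}^K be a balanced frame for H with dual frame (g̃_k)_{k=1}^K (i.e., f = ∑_k ⟨f, f_k⟩ g̃_k for all f). Then for each index l, the family (f_k)_{k≠l} together with (g̃_k − g̃_l)_{k≠l} satisfies f = ∑_{k≠l} ⟨f, f_k⟩ (g̃_k − g̃_l) for all f ∈ H. In particular, removing any single element from a balanced frame still leaves a spanning family. -/
open Finset

section

variable {R M ι : Type*} [Ring R] [AddCommGroup M] [Module R M] [Fintype ι]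

theorem sum_erase_smul_sub_eq_sum_smul [DecidableEq ι] {c : ι → R} (hc : ∑ k, c k = 0)
    (g : ι → M) (l : ι) :
    ∑ k ∈ univ.erase l, c k • (g k - g l) = ∑ k, c k • g k := by
  rw [sum_erase _ (by rw [sub_self, smul_zero])]
  simp only [smul_sub, sum_sub_distrib, ← sum_smul, hc, zero_smul, sub_zero]

theorem span_image_ne_eq_span_range_of_sum_eq_zero {f : ι → M} (hf : ∑ k, f k = 0) (l : ι) :
    Submodule.span R (f '' {k | k ≠ l}) = Submodule.span R (Set.range f) := by
  classical
  refine le_antisymm (Submodule.span_mono (Set.image_subset_range _ _)) ?_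
  rw [Submodule.span_le]
  rintro _ ⟨k, rfl⟩
  by_cases hk : k = l
  · have hfl : f l = -∑ j ∈ univ.erase l, f j := by
      rw [eq_neg_iff_add_eq_zero, add_sum_erase _ _ (mem_univ l), hf]
    subst hk
    rw [hfl]
    exact neg_mem (sum_mem fun j hj => Submodule.subset_span ⟨j, ne_of_mem_erase hj, rfl⟩)
  · exact Submodule.subset_span ⟨k, hk, rfl⟩

end

theorem balanced_frame_one_erasure_general
    {𝕜 E : Type*} [RCLike 𝕜] [NormedAddCommGroup E] [InnerProductSpace 𝕜 E]
    {K : ℕ} (f g : Fin K → E)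
    (hframe : Submodule.span 𝕜 (Set.range f) = ⊤)
    (hbal : (∑ k, f k) = 0)
    (hdual : ∀ x : E, ∑ k, (inner 𝕜 (f k) x : 𝕜) • g k = x) :
    ∀ l : Fin K,
      (∀ x : E, ∑ k ∈ Finset.univ.erase l, (inner 𝕜 (f k) x : 𝕜) • (g k - g l) = x) ∧
      Submodule.span 𝕜 (f '' {k | k ≠ l}) = ⊤ := by
  intro l
  refine ⟨fun x => ?_, ?_⟩
  · have hcoeff : ∑ k, (inner 𝕜 (f k) x : 𝕜) = 0 := by
      rw [← sum_inner, hbal, inner_zero_left]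
    rw [sum_erase_smul_sub_eq_sum_smul hcoeff, hdual]
  · rw [span_image_ne_eq_span_range_of_sum_eq_zero hbal, hframe]

theorem balanced_frame_one_erasure
    {𝕜 E : Type*} [RCLike 𝕜] [NormedAddCommGroup E] [InnerProductSpace 𝕜 E]
    [FiniteDimensional 𝕜 E] {K : ℕ} (f g : Fin K → E)
    (hframe : Submodule.span 𝕜 (Set.range f) = ⊤)
    (hbal : (∑ k, f k) = 0)
    (hdual : ∀ x : E, ∑ k, (inner 𝕜 (f k) x : 𝕜) • g k = x) :
    ∀ l : Fin K,
      (∀ x : E, ∑ k ∈ Finset.univ.erase l, (inner 𝕜 (f k) x : 𝕜) • (g k - g l) = x) ∧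
      Submodule.span 𝕜 (f '' {k | k ≠ l}) = ⊤ :=
  balanced_frame_one_erasure_general f g hframe hbal hdual
end

section
/- Let (f_k)_{k=1}^K be a frame for H and (g̃_k)_{k=1}^K a dual frame. Suppose there exists l with g̃_l ≠ 0 such that f = ∑_{k≠l} ⟨f, g̃_k − g̃_l⟩ f_k for all f ∈ H. Then ∑_{k=1}^K f_k = 0. -/
/-! Subtracting the dual-frame expansion of `x` from the erased one leaves `⟪g l, x⟫ • ∑ k, f k = 0`
for every `x`; at `x = g l` the scalar is `‖g l‖² ≠ 0`. -/

open Finset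

theorem Finset.sum_erase_sub_smul {ι R M : Type*} [Ring R] [AddCommGroup M] [Module R M]
    [DecidableEq ι] (s : Finset ι) (l : ι) (a : ι → R) (v : ι → M) :
    ∑ k ∈ s.erase l, (a k - a l) • v k = ∑ k ∈ s, a k • v k - a l • ∑ k ∈ s, v k := by
  rw [Finset.sum_erase _ (by rw [sub_self, zero_smul]), Finset.smul_sum,
    ← Finset.sum_sub_distrib]
  simp only [sub_smul]

theorem inner_smul_sum_eq_zero_of_erased_dual {𝕜 E ι : Type*} [RCLike 𝕜] [NormedAddCommGroup E]
    [InnerProductSpace 𝕜 E] [Fintype ι] [DecidableEq ι] (f g : ι → E)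
    (hdual : ∀ x : E, ∑ k, (inner 𝕜 (g k) x : 𝕜) • f k = x) (l : ι)
    (h : ∀ x : E, ∑ k ∈ Finset.univ.erase l, (inner 𝕜 (g k - g l) x : 𝕜) • f k = x) (x : E) :
    (inner 𝕜 (g l) x : 𝕜) • ∑ k, f k = 0 := by
  have herased := h x
  simp only [inner_sub_left] at herased
  rw [Finset.sum_erase_sub_smul Finset.univ l (fun k ↦ inner 𝕜 (g k) x), hdual x,
    sub_eq_self] at herased
  exact herased

theorem erased_dual_implies_balanced_general
    {𝕜 E : Type*} [RCLike 𝕜] [NormedAddCommGroup E] [InnerProductSpace 𝕜 E]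
    {K : ℕ} (f g : Fin K → E)
    (hdual : ∀ x : E, ∑ k, (inner 𝕜 (g k) x : 𝕜) • f k = x)
    (l : Fin K) (hl : g l ≠ 0)
    (h : ∀ x : E, ∑ k ∈ Finset.univ.erase l, (inner 𝕜 (g k - g l) x : 𝕜) • f k = x) :
    (∑ k, f k) = 0 :=
  (smul_eq_zero.mp (inner_smul_sum_eq_zero_of_erased_dual f g hdual l h (g l))).resolve_left
    (inner_self_ne_zero.mpr hl)

theorem erased_dual_implies_balanced
    {𝕜 E : Type*} [RCLike 𝕜] [NormedAddCommGroup E] [InnerProductSpace 𝕜 E]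
    [FiniteDimensional 𝕜 E] {K : ℕ} (f g : Fin K → E)
    (hframe : Submodule.span 𝕜 (Set.range f) = ⊤)
    (hdual : ∀ x : E, ∑ k, (inner 𝕜 (g k) x : 𝕜) • f k = x)
    (l : Fin K) (hl : g l ≠ 0)
    (h : ∀ x : E, ∑ k ∈ Finset.univ.erase l, (inner 𝕜 (g k - g l) x : 𝕜) • f k = x) :
    (∑ k, f k) = 0 :=
  erased_dual_implies_balanced_general f g hdual l hl h
end
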